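/- arXiv:2207.14702 — 3 statements merged into one kernel-verified Lean document; each statement's English description precedes it below -/
import Mathlib

section
/- Let p ≥ 3 be a prime, s ≥ 2, and let t1 ≥ 1, t2,…,t_{s−1} ≥ 0, ts ≥ 1 be integers. Then the ℤpℤp²⋯ℤp^s-linear generalized Hadamard code Φ(ℋ_p^{t1,…,ts}) is nonlinear over ℤp, i.e., it is not a ℤp-linear subspace of ℤp^n. -/
/-!
Write `2d = p + 1`. The base matrix has the column `(1; 0)` over `ℤ_p` and the columns
`(p; 1)`, `(p; d)` over `ℤ_{p²}`, and each row-adjoining step keeps a copy of every column of the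
previous matrix with a zero in the new row; so `A_p^{t₁,…,t_s}` has these columns, padded with
zeros. Row by row, and hence on all of `ℋ_p^{t₁,…,t_s}`, the coordinates `y₀, y₁, y_d` at these
columns satisfy `y_d - d y₁ = (1 - d) p y₀`. If `Φ(ℋ)` were linear, `Φ(u) + Φ(u)` would be `Φ(x)`
for a codeword `x`, with `u` the second row. On digits `0, …, p - 1` the Gray map is additive
modulo `p`, and it is injective, so `x` is `0, 2, 1` at the three columns, and the relation
becomes `1 - 2d = -p = 0` in `ℤ_{p²}`, which is false.
-/

/-- The `i`-th digit of `n` in base `p`. -/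
def pdigit (p i n : ℕ) : ℕ := n / p ^ i % p

/-- The generalized Carlet Gray map `φ_r : ℤ_{p^r} → ℤ_p^{p^{r-1}}`:
`φ_r(u) = (u_{r-1},…,u_{r-1}) + (u_0,…,u_{r-2}) Y_{r-1}`, where the `z`-th column of
`Y_{r-1}` consists of the `p`-ary digits of `z`. -/
def grayMap (p r : ℕ) (u : ZMod (p ^ r)) : Fin (p ^ (r - 1)) → ZMod p :=
  fun z => (pdigit p (r - 1) u.val : ZMod p) +
    ∑ i ∈ Finset.range (r - 1), (pdigit p i u.val : ZMod p) * (pdigit p i (z : ℕ) : ZMod p)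
/-- The mixed alphabet space `ℤ_p^{α₁} × ℤ_{p²}^{α₂} × ⋯ × ℤ_{p^s}^{α_s}`
(block `r`, `0 ≤ r ≤ s-1`, has `α r` coordinates over `ℤ_{p^{r+1}}`). -/
abbrev MixedVec (p s : ℕ) (α : Fin s → ℕ) : Type :=
  ∀ r : Fin s, Fin (α r) → ZMod (p ^ ((r : ℕ) + 1))

/-- Coordinates of the Gray map image: block `r` contributes `α r` groups of `p^r`
coordinates over `ℤ_p`. -/
abbrev GrayIdx (p s : ℕ) (α : Fin s → ℕ) : Type :=
  Σ r : Fin s, Fin (α r) × Fin (p ^ (r : ℕ))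

/-- The extended Gray map `Φ : ℤ_p^{α₁} × ℤ_{p²}^{α₂} × ⋯ × ℤ_{p^s}^{α_s} → ℤ_p^n`,
applying `φ_{r+1}` coordinatewise on block `r`. -/
def PhiMap (p s : ℕ) (α : Fin s → ℕ) (x : MixedVec p s α) : GrayIdx p s α → ZMod p :=
  fun q => grayMap p ((q.1 : ℕ) + 1) (x q.1 q.2.1) q.2.2

/-- A matrix over the mixed alphabet `ℤ_p × ℤ_{p²} × ⋯ × ℤ_{p^s}`, with `m` rows
and `α r` columns over `ℤ_{p^{r+1}}`. -/
structure MixedMat (p s : ℕ) where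
  m : ℕ
  α : Fin s → ℕ
  row : Fin m → MixedVec p s α

/-- Total (ℕ-indexed) access to the entries of a mixed matrix. -/
def MixedMat.entry {p s : ℕ} (A : MixedMat p s) (k : ℕ) (r : Fin s) (c : ℕ) :
    ZMod (p ^ ((r : ℕ) + 1)) :=
  if hk : k < A.m then
    if hc : c < A.α r then A.row ⟨k, hk⟩ r ⟨c, hc⟩ else 0
  else 0

/-- The base matrix `A_p^{1,0,…,0,1}`: its first block (over `ℤ_p`) consists of the `p`
columns `(1; c)`, `c = 0,…,p-1`, and its block `r ≥ 1` (over `ℤ_{p^{r+1}}`) consists of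
the `p-1` columns `(p^r; c+1)`, `c = 0,…,p-2`. -/
def baseMat (p s : ℕ) : MixedMat p s where
  m := 2
  α := fun r => if (r : ℕ) = 0 then p else p - 1
  row := fun k r c =>
    if (k : ℕ) = 0 then ((p ^ (r : ℕ) : ℕ) : ZMod (p ^ ((r : ℕ) + 1)))
    else if (r : ℕ) = 0 then (((c : ℕ) : ℕ) : ZMod (p ^ ((r : ℕ) + 1)))
    else (((c : ℕ) + 1 : ℕ) : ZMod (p ^ ((r : ℕ) + 1)))

/-- One step of the recursive construction: from `A = A_p^{t₁,…,t_s}`, adjoin one new row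
of order `p^{s-i'}` (the paper's index `i` equals `i' + 1`), obtaining the blocks
`(A₁ ⋯ A₁ | P₁ ⋯ P_{s-i} | Q₁ ⋯ Q_{i-1})` with the new row appended at the bottom. -/
def stepMat (p s : ℕ) (i' : ℕ) (A : MixedMat p s) : MixedMat p s where
  m := A.m + 1
  α := fun r =>
    if (r : ℕ) = 0 then p * A.α r
    else if (r : ℕ) + i' + 1 ≤ s then
      (p - 1) * p ^ ((r : ℕ) * (A.m - 1)) + p ^ ((r : ℕ) + 1) * A.α r
    else p ^ (s - i') * A.α r
  row := fun k r c =>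
    if (r : ℕ) = 0 then
      -- `p` copies of `A₁`, new row constant `0,1,…,p-1` on the successive copies
      if (k : ℕ) < A.m then A.entry (k : ℕ) r ((c : ℕ) % A.α r)
      else (((c : ℕ) / A.α r : ℕ) : ZMod (p ^ ((r : ℕ) + 1)))
    else if (r : ℕ) + i' + 1 ≤ s then
      -- the block `P_r`
      if (c : ℕ) < (p - 1) * p ^ ((r : ℕ) * (A.m - 1)) then
        -- `p-1` copies of `M_r` (columns: all vectors in `{p^r} × {0,p,…,p(p^r-1)}^{m-1}`),
        -- new row constant `1,…,p-1` on the successive copies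
        if (k : ℕ) < A.m then
          if (k : ℕ) = 0 then ((p ^ (r : ℕ) : ℕ) : ZMod (p ^ ((r : ℕ) + 1)))
          else ((p * ((c : ℕ) % p ^ ((r : ℕ) * (A.m - 1)) / (p ^ (r : ℕ)) ^ ((k : ℕ) - 1)
              % p ^ (r : ℕ)) : ℕ) : ZMod (p ^ ((r : ℕ) + 1)))
        else (((c : ℕ) / p ^ ((r : ℕ) * (A.m - 1)) + 1 : ℕ) : ZMod (p ^ ((r : ℕ) + 1)))
      else
        -- `p^{r+1}` copies of `A_{r+1}`, new row constant `0,1,…,p^{r+1}-1`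
        if (k : ℕ) < A.m then
          A.entry (k : ℕ) r (((c : ℕ) - (p - 1) * p ^ ((r : ℕ) * (A.m - 1))) % A.α r)
        else ((((c : ℕ) - (p - 1) * p ^ ((r : ℕ) * (A.m - 1))) / A.α r : ℕ) :
          ZMod (p ^ ((r : ℕ) + 1)))
    else
      -- the block `Q_k` with `k = r + i' + 1 - s`: `p^{s-i'}` copies of the corresponding
      -- block of `A`, new row constant `p^k·0, p^k·1, …, p^k·(p^{s-i'}-1)`
      if (k : ℕ) < A.m then A.entry (k : ℕ) r ((c : ℕ) % A.α r)
      else ((p ^ ((r : ℕ) + i' + 1 - s) * ((c : ℕ) / A.α r) : ℕ) : ZMod (p ^ ((r : ℕ) + 1)))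

/-- The matrix `A_p^{t₁,…,t_s}`: starting from `A_p^{1,0,…,0,1}`, apply the row-adjoining
construction `t₁ - 1` times with `i = 1`, then `t₂` times with `i = 2`, …, and finally
`t_s - 1` times with `i = s`. -/
def AMat (p s : ℕ) (t : Fin s → ℕ) : MixedMat p s :=
  (List.finRange s).foldl
    (fun A (i : Fin s) =>
      (stepMat p s i.val)^[if i.val = 0 ∨ i.val = s - 1 then t i - 1 else t i] A)
    (baseMat p s)

/-- The `ℤ_pℤ_{p²}⋯ℤ_{p^s}`-additive code `ℋ_p^{t₁,…,t_s}`, generated by the rows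
of `A_p^{t₁,…,t_s}`. -/
def HCode (p s : ℕ) (t : Fin s → ℕ) : AddSubgroup (MixedVec p s (AMat p s t).α) :=
  AddSubgroup.closure (Set.range (AMat p s t).row)

/-- The `ℤ_pℤ_{p²}⋯ℤ_{p^s}`-linear code `H_p^{t₁,…,t_s} = Φ(ℋ_p^{t₁,…,t_s})`. -/
def PhiCode (p s : ℕ) (t : Fin s → ℕ) :
    Set (GrayIdx p s (AMat p s t).α → ZMod p) :=
  PhiMap p s (AMat p s t).α '' (HCode p s t : Set (MixedVec p s (AMat p s t).α))

section Digits

variable {p : ℕ}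

lemma pdigit_succ (i n : ℕ) : pdigit p (i + 1) n = pdigit p i (n / p) := by
  rw [pdigit, pdigit, Nat.div_div_eq_div_mul, pow_succ']

lemma pdigit_of_lt {u : ℕ} (hu : u < p) (i : ℕ) : pdigit p i u = if i = 0 then u else 0 := by
  cases i with
  | zero => simp [pdigit, Nat.mod_eq_of_lt hu]
  | succ i => rw [pdigit_succ, Nat.div_eq_of_lt hu]; simp [pdigit]

lemma pdigit_pow (hp : 1 < p) (i j : ℕ) : pdigit p j (p ^ i) = if j = i then 1 else 0 := by
  induction j generalizing i with
  | zero => cases i <;> simp [pdigit, Nat.mod_eq_of_lt hp, pow_succ]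
  | succ j ih =>
    cases i with
    | zero => rw [pow_zero, pdigit_succ, Nat.div_eq_of_lt hp]; simp [pdigit]
    | succ i => simp [pdigit_succ, pow_succ, Nat.mul_div_cancel _ (by omega : 0 < p), ih]

lemma eq_of_pdigit_eq (hp : 0 < p) {e m n : ℕ} (hm : m < p ^ e) (hn : n < p ^ e)
    (h : ∀ i < e, pdigit p i m = pdigit p i n) : m = n := by
  induction e generalizing m n with
  | zero => simp_all
  | succ e ih =>
    have hdiv : m / p = n / p := by
      refine ih ?_ ?_ fun i hi => ?_
      · rw [Nat.div_lt_iff_lt_mul hp, ← pow_succ]; exact hm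
      · rw [Nat.div_lt_iff_lt_mul hp, ← pow_succ]; exact hn
      · simpa only [pdigit_succ] using h (i + 1) (by omega)
    have hmod : m % p = n % p := by simpa [pdigit] using h 0 (by omega)
    rw [← Nat.div_add_mod m p, ← Nat.div_add_mod n p, hdiv, hmod]

end Digits

section GrayMap

variable {p : ℕ}

lemma grayMap_zero (e : ℕ) : grayMap p e 0 = 0 := by
  funext z
  simp [grayMap, pdigit]

lemma grayMap_natCast_of_lt {e a : ℕ} (he : 2 ≤ e) (ha : a < p) :
    grayMap p e a = fun z : Fin (p ^ (e - 1)) => (a : ZMod p) * (pdigit p 0 z : ZMod p) := by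
  have hval : (a : ZMod (p ^ e)).val = a :=
    ZMod.val_cast_of_lt (ha.trans_le (Nat.le_self_pow (by omega) p))
  funext z
  rw [grayMap, hval, Finset.sum_eq_single 0]
  · simp [pdigit_of_lt ha, show e - 1 ≠ 0 by omega]
  · intro i _ hi
    simp [pdigit_of_lt ha, hi]
  · simp; omega

lemma grayMap_natCast_add {e a b : ℕ} (he : 2 ≤ e) (ha : a < p) (hb : b < p) :
    grayMap p e a + grayMap p e b = grayMap p e ((a + b) % p : ℕ) := by
  rw [grayMap_natCast_of_lt he ha, grayMap_natCast_of_lt he hb,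
    grayMap_natCast_of_lt he (Nat.mod_lt _ (by omega))]
  funext z
  simp only [Pi.add_apply, ZMod.natCast_mod, Nat.cast_add]
  ring

/-- The coordinate `z = 0` reads off the top digit of `u`, and the coordinate `z = p ^ i`
the sum of the top digit and the `i`-th one. -/
lemma grayMap_injective (hp : 1 < p) (e : ℕ) : Function.Injective (grayMap p e) := by
  intro x y hxy
  have : NeZero (p ^ e) := ⟨by positivity⟩
  have cast_inj : ∀ {a b : ℕ}, a < p → b < p → (a : ZMod p) = b → a = b := fun ha hb h => by
    simpa [ZMod.natCast_eq_natCast_iff', Nat.mod_eq_of_lt ha, Nat.mod_eq_of_lt hb] using h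
  have htop : pdigit p (e - 1) x.val = pdigit p (e - 1) y.val := by
    have h0 := congrFun hxy ⟨0, by positivity⟩
    simp only [grayMap, pdigit, Nat.zero_div, Nat.zero_mod, Nat.cast_zero,
      mul_zero, Finset.sum_const_zero, add_zero] at h0
    exact cast_inj (Nat.mod_lt _ (by omega)) (Nat.mod_lt _ (by omega)) h0
  refine ZMod.val_injective _ (eq_of_pdigit_eq (by omega) x.val_lt y.val_lt fun i hi => ?_)
  rcases (by omega : i = e - 1 ∨ i < e - 1) with rfl | hi'
  · exact htop
  have hz := congrFun hxy ⟨p ^ i, Nat.pow_lt_pow_right hp hi'⟩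
  simp only [grayMap, pdigit_pow hp, htop, Nat.cast_ite, Nat.cast_one,
    Nat.cast_zero, mul_ite, mul_one, mul_zero, Finset.sum_ite_eq', Finset.mem_range, hi',
    if_true, add_right_inj] at hz
  exact cast_inj (Nat.mod_lt _ (by omega)) (Nat.mod_lt _ (by omega)) hz

end GrayMap

namespace MixedMat

variable {p s : ℕ}

/-- Stated with the total `entry`, so that `v` also prescribes zeros below the last row: this is
what makes the property stable under adjoining rows. -/
def HasColumn (B : MixedMat p s) (r : Fin s) (v : ℕ → ZMod (p ^ ((r : ℕ) + 1))) : Prop :=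
  ∃ c : Fin (B.α r), ∀ k, B.entry k r c = v k

lemma entry_coe (B : MixedMat p s) (k : Fin B.m) (r : Fin s) (c : Fin (B.α r)) :
    B.entry k r c = B.row k r c := by
  simp [entry]

lemma entry_of_le (B : MixedMat p s) {k : ℕ} (hk : B.m ≤ k) (r : Fin s) (c : ℕ) :
    B.entry k r c = 0 := by
  simp [entry, Nat.not_lt.mpr hk]

/-- The witness is the column of the first copy of block `r` of `A` in `stepMat`, on which the
new row vanishes. -/
lemma exists_entry_stepMat_eq (hp : 0 < p) (i' : ℕ) (A : MixedMat p s) {r : Fin s}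
    (c : Fin (A.α r)) :
    ∃ c' : Fin ((stepMat p s i' A).α r), ∀ k, (stepMat p s i' A).entry k r c' = A.entry k r c := by
  have hc := c.isLt
  have hmul : ∀ {n}, 0 < n → c < n * A.α r := fun hn =>
    hc.trans_le (Nat.le_mul_of_pos_left _ hn)
  by_cases hr : (r : ℕ) = 0
  · refine ⟨⟨c, by simpa [stepMat, hr] using hmul hp⟩, fun k => ?_⟩
    rcases lt_trichotomy k A.m with hk | rfl | hk
    · simp [entry, stepMat, hr, hk, Nat.lt_succ_of_lt hk, Nat.mod_eq_of_lt hc,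
        Nat.not_le.mpr (hmul hp)]
    · simp [entry, stepMat, hr, Nat.div_eq_of_lt hc]
    · rw [entry_of_le _ hk, A.entry_of_le hk.le]
  by_cases hP : (r : ℕ) + i' + 1 ≤ s
  · set N := (p - 1) * p ^ ((r : ℕ) * (A.m - 1))
    have hlt : N + c < N + p ^ ((r : ℕ) + 1) * A.α r := by
      have := hmul (n := p ^ ((r : ℕ) + 1)) (by positivity); omega
    refine ⟨⟨N + c, by simp only [stepMat, hr, hP, if_false, if_true]; exact hlt⟩, fun k => ?_⟩
    rcases lt_trichotomy k A.m with hk | rfl | hk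
    · simp [entry, stepMat, hr, hP, hk, Nat.lt_succ_of_lt hk, Nat.mod_eq_of_lt hc, N, hlt]
    · simp [entry, stepMat, hr, hP, Nat.div_eq_of_lt hc, N, hlt]
    · rw [entry_of_le _ hk, A.entry_of_le hk.le]
  · refine ⟨⟨c, by simpa [stepMat, hr, hP] using hmul (n := p ^ (s - i')) (by positivity)⟩,
      fun k => ?_⟩
    rcases lt_trichotomy k A.m with hk | rfl | hk
    · simp [entry, stepMat, hr, hP, hk, Nat.lt_succ_of_lt hk, Nat.mod_eq_of_lt hc,
        Nat.not_le.mpr (hmul (n := p ^ (s - i')) (by positivity))]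
    · simp [entry, stepMat, hr, hP, Nat.div_eq_of_lt hc]
    · rw [entry_of_le _ hk, A.entry_of_le hk.le]

lemma HasColumn.stepMat (hp : 0 < p) (i' : ℕ) {A : MixedMat p s} {r : Fin s}
    {v : ℕ → ZMod (p ^ ((r : ℕ) + 1))} (h : A.HasColumn r v) :
    (stepMat p s i' A).HasColumn r v := by
  obtain ⟨c, hc⟩ := h
  obtain ⟨c', hc'⟩ := exists_entry_stepMat_eq hp i' A c
  exact ⟨c', fun k => (hc' k).trans (hc k)⟩

end MixedMat

theorem AMat_induction {p s : ℕ} (t : Fin s → ℕ) {P : MixedMat p s → Prop}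
    (base : P (baseMat p s)) (step : ∀ i' A, P A → P (stepMat p s i' A)) : P (AMat p s t) := by
  have hfold : ∀ (l : List (Fin s)) (B : MixedMat p s), P B → P (l.foldl
      (fun A (i : Fin s) =>
        (stepMat p s i.val)^[if i.val = 0 ∨ i.val = s - 1 then t i - 1 else t i] A) B) := by
    intro l
    induction l with
    | nil => exact fun _ hB => hB
    | cons i l ih => exact fun B hB => ih _ (Function.Iterate.rec P hB (step i.val) _)
  exact hfold _ _ base

lemma MixedMat.HasColumn.AMat {p s : ℕ} (hp : 0 < p) (t : Fin s → ℕ) {r : Fin s}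
    {v : ℕ → ZMod (p ^ ((r : ℕ) + 1))} (h : (baseMat p s).HasColumn r v) :
    (AMat p s t).HasColumn r v :=
  AMat_induction (P := fun B => B.HasColumn r v) t h fun i' _ h => h.stepMat hp i'

lemma two_le_AMat_m (p s : ℕ) (t : Fin s → ℕ) : 2 ≤ (AMat p s t).m :=
  AMat_induction (P := fun B => 2 ≤ B.m) t le_rfl fun _ _ h => h.trans (Nat.le_succ _)

def pairCol {R : Type*} [Zero R] (v₀ v₁ : R) (k : ℕ) : R :=
  if k = 0 then v₀ else if k = 1 then v₁ else 0

section BaseMat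

variable {p s : ℕ}

lemma baseMat_hasColumn_one_zero {r : Fin s} (hp : 0 < p) (hr : (r : ℕ) = 0) :
    (baseMat p s).HasColumn r (pairCol 1 0) := by
  refine ⟨⟨0, by simpa [baseMat, hr] using hp⟩, fun k => ?_⟩
  rcases Nat.lt_or_ge k 2 with hk | hk
  · interval_cases k <;> simp [MixedMat.entry, baseMat, pairCol, hr, hp.ne']
  · rw [MixedMat.entry_of_le _ hk, pairCol, if_neg (by omega), if_neg (by omega)]

lemma baseMat_hasColumn {r : Fin s} (hr : (r : ℕ) ≠ 0) {a : ℕ} (ha₀ : 0 < a) (ha : a < p) :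
    (baseMat p s).HasColumn r (pairCol ((p ^ (r : ℕ) : ℕ) : ZMod _) (a : ZMod _)) := by
  refine ⟨⟨a - 1, by simp [baseMat, hr]; omega⟩, fun k => ?_⟩
  rcases Nat.lt_or_ge k 2 with hk | hk
  · interval_cases k <;>
      simp [MixedMat.entry, baseMat, pairCol, hr, Nat.sub_add_cancel ha₀, Nat.not_le.mpr ha]
  · rw [MixedMat.entry_of_le _ hk, pairCol, if_neg (by omega), if_neg (by omega)]

end BaseMat

def mulPowHom (p k r : ℕ) : ZMod (p ^ (k + 1)) →+ ZMod (p ^ (r + 1)) :=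
  ZMod.lift (p ^ (k + 1)) ⟨(AddMonoidHom.mulLeft ((p ^ r : ℕ) : ZMod (p ^ (r + 1)))).comp
    (Int.castAddHom (ZMod (p ^ (r + 1)))), by
      have : ((p ^ r * p ^ (k + 1) : ℕ) : ZMod (p ^ (r + 1))) = 0 := by
        rw [ZMod.natCast_eq_zero_iff, ← pow_add]
        exact pow_dvd_pow p (by omega)
      simpa using this⟩

lemma mulPowHom_one (p k r : ℕ) : mulPowHom p k r 1 = (p ^ r : ℕ) := by
  rw [mulPowHom, ← Int.cast_one, ZMod.lift_coe]
  simp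

lemma MixedMat.mul_sub_mul_eq_of_mem_closure {p s : ℕ} {B : MixedMat p s} {r₀ r : Fin s}
    (f : ZMod (p ^ ((r₀ : ℕ) + 1)) →+ ZMod (p ^ ((r : ℕ) + 1)))
    {w : ZMod (p ^ ((r₀ : ℕ) + 1))} {a b : ZMod (p ^ ((r : ℕ) + 1))}
    {c₀ : Fin (B.α r₀)} {c₁ c₂ : Fin (B.α r)}
    (h₀ : ∀ k, B.entry k r₀ c₀ = pairCol w 0 k) (h₁ : ∀ k, B.entry k r c₁ = pairCol (f w) a k)
    (h₂ : ∀ k, B.entry k r c₂ = pairCol (f w) b k)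
    {y : MixedVec p s B.α} (hy : y ∈ AddSubgroup.closure (Set.range B.row)) :
    a * y r c₂ - b * y r c₁ = (a - b) * f (y r₀ c₀) := by
  let G : MixedVec p s B.α →+ ZMod (p ^ ((r : ℕ) + 1)) :=
    AddMonoidHom.mk' (fun y => a * y r c₂ - b * y r c₁ - (a - b) * f (y r₀ c₀))
      fun y z => by simp only [Pi.add_apply, map_add]; ring
  suffices AddSubgroup.closure (Set.range B.row) ≤ G.ker from
    sub_eq_zero.mp ((G.mem_ker).mp (this hy))
  rw [AddSubgroup.closure_le]
  rintro _ ⟨k, rfl⟩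
  have hk₀ := h₀ k; have hk₁ := h₁ k; have hk₂ := h₂ k
  simp only [MixedMat.entry_coe] at hk₀ hk₁ hk₂
  change a * B.row k r c₂ - b * B.row k r c₁ - (a - b) * f (B.row k r₀ c₀) = 0
  rw [hk₀, hk₁, hk₂, pairCol, pairCol, pairCol]
  split_ifs <;> first | ring1 | simp [mul_comm]

section PhiMap

variable {p s : ℕ} {α : Fin s → ℕ} {x u v : MixedVec p s α}

lemma grayMap_of_PhiMap_eq_add (h : PhiMap p s α x = PhiMap p s α u + PhiMap p s α v)
    (r : Fin s) (c : Fin (α r)) :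
    grayMap p (r + 1) (x r c) = grayMap p (r + 1) (u r c) + grayMap p (r + 1) (v r c) :=
  funext fun z => congrFun h ⟨r, (c, z)⟩

lemma eq_zero_of_PhiMap_eq_add (hp : 1 < p)
    (h : PhiMap p s α x = PhiMap p s α u + PhiMap p s α v) {r : Fin s} {c : Fin (α r)}
    (hu : u r c = 0) (hv : v r c = 0) : x r c = 0 :=
  grayMap_injective hp _ <| by rw [grayMap_of_PhiMap_eq_add h, hu, hv, grayMap_zero, add_zero]

lemma eq_natCast_of_PhiMap_eq_add (hp : 1 < p)
    (h : PhiMap p s α x = PhiMap p s α u + PhiMap p s α v) {r : Fin s} (hr : (r : ℕ) ≠ 0)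
    {c : Fin (α r)} {a b : ℕ} (ha : a < p) (hb : b < p) (hu : u r c = a) (hv : v r c = b) :
    x r c = ((a + b) % p : ℕ) :=
  grayMap_injective hp _ <| by
    rw [grayMap_of_PhiMap_eq_add h, hu, hv, grayMap_natCast_add (by omega) ha hb]

end PhiMap

lemma natCast_self_ne_zero_zmod_pow {p r : ℕ} (hp : 1 < p) (hr : r ≠ 0) :
    (p : ZMod (p ^ (r + 1))) ≠ 0 := by
  rw [Ne, ZMod.natCast_eq_zero_iff]
  intro h
  have h' : p ^ (r + 1) ∣ p ^ 1 := by rwa [pow_one]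
  have := (Nat.pow_dvd_pow_iff_le_right hp).mp h'
  omega

theorem MixedMat.exists_PhiMap_add_self_not_mem {p s d : ℕ} (hp : 1 < p) (hd : 2 * d = p + 1)
    {B : MixedMat p s} (hm : 2 ≤ B.m) {r₀ r : Fin s} (hr : (r : ℕ) ≠ 0)
    (h₀ : B.HasColumn r₀ (pairCol 1 0))
    (h₁ : B.HasColumn r (pairCol (p ^ (r : ℕ) : ℕ) ((1 : ℕ) : ZMod _)))
    (h₂ : B.HasColumn r (pairCol (p ^ (r : ℕ) : ℕ) d)) :
    ∃ u ∈ AddSubgroup.closure (Set.range B.row), ∀ x ∈ AddSubgroup.closure (Set.range B.row),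
      PhiMap p s B.α x ≠ PhiMap p s B.α u + PhiMap p s B.α u := by
  refine ⟨B.row ⟨1, hm⟩, AddSubgroup.subset_closure (Set.mem_range_self _), fun x hx hΦ => ?_⟩
  rw [← mulPowHom_one p r₀ r] at h₁ h₂
  obtain ⟨c₀, h₀⟩ := h₀
  obtain ⟨c₁, h₁⟩ := h₁
  obtain ⟨c₂, h₂⟩ := h₂
  have row_one : ∀ {r' : Fin s} {c : Fin (B.α r')} {v₀ v₁ : ZMod (p ^ ((r' : ℕ) + 1))},
      (∀ k, B.entry k r' c = pairCol v₀ v₁ k) → B.row ⟨1, hm⟩ r' c = v₁ :=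
    fun h => (B.entry_coe _ _ _).symm.trans (h 1)
  have hx₀ := eq_zero_of_PhiMap_eq_add hp hΦ (row_one h₀) (row_one h₀)
  have hx₁ := eq_natCast_of_PhiMap_eq_add hp hΦ hr (by omega) (by omega) (row_one h₁) (row_one h₁)
  have hx₂ := eq_natCast_of_PhiMap_eq_add hp hΦ hr (by omega) (by omega) (row_one h₂) (row_one h₂)
  have h11 : (1 + 1) % p = 2 := Nat.mod_eq_of_lt (by omega)
  have hdd : (d + d) % p = 1 := by rw [← two_mul, hd, Nat.add_mod_left, Nat.mod_eq_of_lt hp]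
  have hrel := mul_sub_mul_eq_of_mem_closure _ h₀ h₁ h₂ hx
  rw [hx₀, hx₁, hx₂, h11, hdd, map_zero, mul_zero] at hrel
  have hd' : ((2 * d : ℕ) : ZMod (p ^ ((r : ℕ) + 1))) = (p + 1 : ℕ) := by rw [hd]
  push_cast at hrel hd'
  exact natCast_self_ne_zero_zmod_pow hp hr (by linear_combination -hd' - hrel)

/-- For `p ≥ 3` prime, the `ℤ_pℤ_{p²}⋯ℤ_{p^s}`-linear generalized Hadamard code
`Φ(ℋ_p^{t₁,…,t_s})` is nonlinear over `ℤ_p`, i.e. it is not a `ℤ_p`-linear subspace. -/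
theorem nonlinear_p_ge_3 (p s : ℕ) (hp : p.Prime) (hp3 : 3 ≤ p) (hs : 2 ≤ s)
    (t : Fin s → ℕ) :
    ¬ ∃ W : Submodule (ZMod p) (GrayIdx p s (AMat p s t).α → ZMod p),
        (W : Set (GrayIdx p s (AMat p s t).α → ZMod p)) = PhiCode p s t := by
  rintro ⟨W, hW⟩
  obtain ⟨d, hd⟩ : ∃ d, 2 * d = p + 1 :=
    ⟨(p + 1) / 2, by have := hp.eq_two_or_odd.resolve_left (by omega); omega⟩
  have hp0 : 0 < p := by omega
  obtain ⟨u, hu, hnot⟩ := (AMat p s t).exists_PhiMap_add_self_not_mem (by omega) hd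
    (two_le_AMat_m p s t) (r₀ := ⟨0, by omega⟩) (r := ⟨1, hs⟩) one_ne_zero
    ((baseMat_hasColumn_one_zero hp0 rfl).AMat hp0 t)
    ((baseMat_hasColumn one_ne_zero one_pos (by omega)).AMat hp0 t)
    ((baseMat_hasColumn one_ne_zero (by omega) (by omega)).AMat hp0 t)
  have hΦu : PhiMap _ _ _ u ∈ W := by rw [← SetLike.mem_coe, hW]; exact ⟨u, hu, rfl⟩
  obtain ⟨x, hx, hΦ⟩ : PhiMap _ _ _ u + PhiMap _ _ _ u ∈ PhiCode p s t := by
    rw [← hW]; exact W.add_mem hΦu hΦu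
  exact hnot x hx hΦ
end

section
/- Let p be a prime and s ≥ 2. The ℤpℤp²⋯ℤp^s-additive code generated by the two rows of the base matrix A_p^{1,0,…,0,1} is a ℤpℤp²⋯ℤp^s-additive generalized Hadamard code of type (p, p−1, p−1, …, p−1; 1, 0, …, 0, 1); in particular, its Gray image is a generalized Hadamard code over ℤp of length p^s. -/
/-- A generalized Hadamard matrix `H(p,λ)` over `ℤ_p`: a `pλ × pλ` matrix such that for
every two distinct rows, each element of `ℤ_p` occurs exactly `λ` times among the
coordinatewise differences of the two rows. -/
def IsGHMatrix (p lam : ℕ) (H : Matrix (Fin (p * lam)) (Fin (p * lam)) (ZMod p)) : Prop :=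
  ∀ i j : Fin (p * lam), i ≠ j → ∀ a : ZMod p,
    (Finset.univ.filter fun k => H i k - H j k = a).card = lam

/-- A square matrix over `ZMod p` is normalized if its first row and first column are zero. -/
def IsNormalized {n p : ℕ} (H : Matrix (Fin n) (Fin n) (ZMod p)) : Prop :=
  ∀ k : Fin n, H ⟨0, k.pos⟩ k = 0 ∧ H k ⟨0, k.pos⟩ = 0

/-- The code `C_H = ∪_{a ∈ ℤ_p} (F_H + a·1)`, where `F_H` is the set of rows of `H`. -/
def GHCodeOf {p n : ℕ} (H : Matrix (Fin n) (Fin n) (ZMod p)) : Set (Fin n → ZMod p) :=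
  {x | ∃ (i : Fin n) (a : ZMod p), x = fun j => H i j + a}

/-- A code `C` (over `ℤ_p`, on an arbitrary finite coordinate set) is a generalized
Hadamard code if, after identifying its coordinates with `Fin (p * λ)`, it equals `C_H`
for some normalized generalized Hadamard matrix `H = H(p,λ)`. -/
def IsGHCode (p : ℕ) {ι : Type} [Fintype ι] (C : Set (ι → ZMod p)) : Prop :=
  ∃ (lam : ℕ) (e : ι ≃ Fin (p * lam)) (H : Matrix (Fin (p * lam)) (Fin (p * lam)) (ZMod p)),
    IsGHMatrix p lam H ∧ IsNormalized H ∧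
      C = {x | ∃ (i : Fin (p * lam)) (a : ZMod p), ∀ j, x j = H i (e j) + a}

section AuxDigits
open Finset

variable {p : ℕ}

lemma pdigit_eq (i n : ℕ) : pdigit p i n = n % p ^ (i+1) / p ^ i := by
  rw [pdigit, pow_succ, Nat.mod_mul_right_div_self]

lemma pdigit_lt (hp : 0 < p) (i n : ℕ) : pdigit p i n < p := Nat.mod_lt _ hp

lemma pdigit_mod {i m : ℕ} (h : i < m) (n : ℕ) : pdigit p i (n % p ^ m) = pdigit p i n := by
  rw [pdigit_eq, pdigit_eq, Nat.mod_mod_of_dvd _ (pow_dvd_pow p h)]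

lemma pdigit_add_high {i r : ℕ} (h : i < r) (n a : ℕ) :
    pdigit p i (n + a * p ^ r) = pdigit p i n := by
  rw [pdigit_eq, pdigit_eq]
  congr 1
  have : a * p ^ r = a * p ^ (r - (i+1)) * p ^ (i+1) := by
    rw [mul_assoc, ← pow_add]; congr 2; omega
  rw [this, Nat.add_mul_mod_self_right]

lemma pdigit_add_top (hp : 0 < p) (r n a : ℕ) :
    pdigit p r (n + a * p ^ r) = (pdigit p r n + a) % p := by
  rw [pdigit, pdigit, Nat.add_mul_div_right _ _ (pow_pos hp r)]
  exact (Nat.mod_add_mod _ _ _).symm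

lemma mod_pow_succ_eq (hp : 0 < p) (r n : ℕ) :
    n % p ^ (r+1) = n % p ^ r + p ^ r * pdigit p r n := by
  rw [pdigit_eq]
  have h1 : n % p ^ (r+1) % p ^ r = n % p ^ r := Nat.mod_mod_of_dvd _ (pow_dvd_pow p (by omega))
  have := Nat.div_add_mod (n % p ^ (r+1)) (p ^ r)
  omega

lemma mod_pow_eq_of_digits (hp : 0 < p) {x y : ℕ} (r : ℕ)
    (h : ∀ i < r, pdigit p i x = pdigit p i y) : x % p ^ r = y % p ^ r := by
  induction r with
  | zero => simp [Nat.mod_one]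
  | succ r ih =>
    rw [mod_pow_succ_eq hp, mod_pow_succ_eq hp, ih (fun i hi => h i (by omega)),
      h r (by omega)]

end AuxDigits

section AuxGray
open Finset

variable {p : ℕ} (hp : 1 < p)
include hp

lemma grayMap_apply (r : ℕ) (u : ZMod (p ^ (r+1))) (z : Fin (p ^ r)) :
    grayMap p (r+1) u z = (pdigit p r u.val : ZMod p) +
      ∑ i ∈ Finset.range r, (pdigit p i u.val : ZMod p) * (pdigit p i (z : ℕ) : ZMod p) :=
  rfl

lemma grayMap_zero_s5 (r : ℕ) (z : Fin (p ^ r)) : grayMap p (r+1) (0 : ZMod (p ^ (r+1))) z = 0 := by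
  haveI : NeZero (p ^ (r+1)) := ⟨by positivity⟩
  rw [grayMap_apply hp]
  simp [ZMod.val_zero, pdigit]

lemma grayMap_shift (r : ℕ) (u : ZMod (p ^ (r+1))) (a : ℕ) (z : Fin (p ^ r)) :
    grayMap p (r+1) (u + ((a * p ^ r : ℕ) : ZMod (p ^ (r+1)))) z
      = grayMap p (r+1) u z + (a : ZMod p) := by
  haveI : NeZero (p ^ (r+1)) := ⟨by positivity⟩
  have hval : (u + ((a * p ^ r : ℕ) : ZMod (p ^ (r+1)))).val
      = (u.val + a * p ^ r) % p ^ (r+1) := by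
    conv_lhs => rw [show u = ((u.val : ℕ) : ZMod (p ^ (r+1))) by simp [ZMod.natCast_val,
      ZMod.cast_id]]
    rw [← Nat.cast_add, ZMod.val_natCast]
  rw [grayMap_apply hp, grayMap_apply hp, hval]
  have hlow : ∀ i < r, pdigit p i ((u.val + a * p ^ r) % p ^ (r+1)) = pdigit p i u.val := by
    intro i hi
    rw [pdigit_mod (by omega), pdigit_add_high hi]
  have htop : pdigit p r ((u.val + a * p ^ r) % p ^ (r+1)) = (pdigit p r u.val + a) % p := by
    rw [pdigit_mod (by omega), pdigit_add_top (by omega)]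
  rw [htop]
  rw [Finset.sum_congr rfl (fun i hi => by rw [hlow i (Finset.mem_range.mp hi)])]
  push_cast [ZMod.natCast_mod]
  ring

end AuxGray
section AuxCount
open Finset Function

lemma fiber_card {G H : Type*} [AddCommGroup G] [Fintype G] [AddCommGroup H] [Fintype H]
    [DecidableEq H] (f : G →+ H) (hf : Surjective f) (c : H) :
    (Finset.univ.filter fun v => f v = c).card * Fintype.card H = Fintype.card G := by
  have key : ∀ c' : H, (Finset.univ.filter fun v => f v = c').card
      = (Finset.univ.filter fun v => f v = c).card := by
    intro c'
    obtain ⟨g, hg⟩ := hf (c - c')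
    apply Finset.card_bij (fun v _ => v + g)
    · intro v hv
      simp only [mem_filter, mem_univ, true_and] at hv ⊢
      rw [map_add, hv, hg]; abel
    · intro v1 _ v2 _ h
      exact add_right_cancel h
    · intro w hw
      simp only [mem_filter, mem_univ, true_and] at hw ⊢
      exact ⟨w - g, by rw [map_sub, hw, hg]; abel, by abel⟩
  have h1 : Fintype.card G =
      ∑ c' : H, (Finset.univ.filter fun v => f v = c').card := by
    rw [← Finset.card_univ]
    exact Finset.card_eq_sum_card_fiberwise (fun x _ => Finset.mem_univ (f x))
  rw [h1, Finset.sum_congr rfl (fun c' _ => key c'), Finset.sum_const, Finset.card_univ,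
    smul_eq_mul, mul_comm]

variable {p : ℕ}

lemma dig_bijective (hp : 1 < p) (r : ℕ) :
    Bijective (fun (z : Fin (p ^ r)) (i : Fin r) => (pdigit p (i : ℕ) (z : ℕ) : ZMod p)) := by
  haveI : NeZero p := ⟨by omega⟩
  rw [Fintype.bijective_iff_injective_and_card]
  constructor
  · intro z z' h
    have hd : ∀ i < r, pdigit p i (z : ℕ) = pdigit p i (z' : ℕ) := by
      intro i hi
      have := congrFun h ⟨i, hi⟩
      have h1 := pdigit_lt (p := p) (by omega) i (z : ℕ)
      have h2 := pdigit_lt (p := p) (by omega) i (z' : ℕ)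
      have := congrArg ZMod.val this
      rwa [ZMod.val_cast_of_lt h1, ZMod.val_cast_of_lt h2] at this
    have := mod_pow_eq_of_digits (p := p) (by omega) r hd
    rw [Nat.mod_eq_of_lt z.isLt, Nat.mod_eq_of_lt z'.isLt] at this
    exact Fin.ext this
  · rw [Fintype.card_fun]
    simp [ZMod.card]

/-- counting for the nondegenerate case -/
lemma count_nondeg (hp : p.Prime) (r : ℕ) (u u' : ZMod (p ^ (r+1)))
    (hne : ∃ i < r, ((pdigit p i u.val : ZMod p) ≠ (pdigit p i u'.val : ZMod p)))
    (a : ZMod p) :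
    (Finset.univ.filter fun z : Fin (p ^ r) =>
      grayMap p (r+1) u z - grayMap p (r+1) u' z = a).card = p ^ (r - 1) := by
  haveI : Fact p.Prime := ⟨hp⟩
  have hp1 : 1 < p := hp.one_lt
  set δ : Fin r → ZMod p :=
    fun i => (pdigit p (i : ℕ) u.val : ZMod p) - (pdigit p (i : ℕ) u'.val : ZMod p) with hδ
  obtain ⟨i₀l, hi₀l, hi₀⟩ := hne
  set i₀ : Fin r := ⟨i₀l, hi₀l⟩
  have hδ₀ : δ i₀ ≠ 0 := fun h => hi₀ (by simpa [δ, sub_eq_zero] using h)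
  set C0 : ZMod p := (pdigit p r u.val : ZMod p) - (pdigit p r u'.val : ZMod p) with hC0
  set dig : Fin (p ^ r) → (Fin r → ZMod p) :=
    fun z i => (pdigit p (i : ℕ) (z : ℕ) : ZMod p) with hdig
  set f : (Fin r → ZMod p) →+ ZMod p :=
    AddMonoidHom.mk' (fun w => ∑ i, δ i * w i)
      (by intro w1 w2; simp [mul_add, Finset.sum_add_distrib]) with hf
  have hexp : ∀ z, grayMap p (r+1) u z - grayMap p (r+1) u' z = C0 + f (dig z) := by
    intro z
    rw [grayMap_apply hp1, grayMap_apply hp1]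
    have : (f (dig z) : ZMod p) = ∑ i ∈ Finset.range r,
        ((pdigit p i u.val : ZMod p) - (pdigit p i u'.val : ZMod p)) *
          (pdigit p i (z : ℕ) : ZMod p) := by
      show (∑ i : Fin r, δ i * dig z i) = _
      rw [← Fin.sum_univ_eq_sum_range (fun i =>
        ((pdigit p i u.val : ZMod p) - (pdigit p i u'.val : ZMod p)) *
          (pdigit p i (z : ℕ) : ZMod p)) r]
    rw [this, hC0,
      Finset.sum_congr rfl (fun (i : ℕ) _ =>
        (sub_mul ((pdigit p i u.val : ZMod p)) ((pdigit p i u'.val : ZMod p))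
          ((pdigit p i (z : ℕ) : ZMod p)))),
      Finset.sum_sub_distrib]
    ring
  have hsurj : Surjective f := by
    intro c
    set w : Fin r → ZMod p := Pi.single i₀ ((δ i₀)⁻¹ * c) with hw
    refine ⟨w, ?_⟩
    have hfw : f w = ∑ i, δ i * w i := rfl
    rw [hfw, Finset.sum_eq_single i₀]
    · rw [hw, Pi.single_eq_same, ← mul_assoc, mul_inv_cancel₀ hδ₀, one_mul]
    · intro b _ hb; rw [hw, Pi.single_eq_of_ne hb, mul_zero]
    · intro h; exact absurd (Finset.mem_univ i₀) h
  have hcount : (Finset.univ.filter fun z : Fin (p ^ r) =>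
      grayMap p (r+1) u z - grayMap p (r+1) u' z = a).card
      = (Finset.univ.filter fun w : Fin r → ZMod p => f w = a - C0).card := by
    have hfilt : (Finset.univ.filter fun z : Fin (p ^ r) =>
        grayMap p (r+1) u z - grayMap p (r+1) u' z = a)
        = (Finset.univ.filter fun z : Fin (p ^ r) => f (dig z) = a - C0) := by
      apply Finset.filter_congr
      intro z _
      rw [hexp z]
      constructor
      · intro h; rw [← h]; ring
      · intro h; rw [h]; ring
    rw [hfilt]
    apply Finset.card_bij (fun z _ => dig z)
    · intro z hz
      simpa using (Finset.mem_filter.mp hz).2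
    · intro z1 _ z2 _ h
      exact (dig_bijective hp1 r).1 h
    · intro w hw
      obtain ⟨z, hz⟩ := (dig_bijective hp1 r).2 w
      exact ⟨z, by simp only [Finset.mem_filter, Finset.mem_univ, true_and]
                   rw [show dig z = w from hz]
                   simpa using (Finset.mem_filter.mp hw).2, hz⟩
  rw [hcount]
  have := fiber_card f hsurj (a - C0)
  rw [Fintype.card_fun] at this
  simp only [ZMod.card, Fintype.card_fin] at this
  have hr : 1 ≤ r := by omega
  have : (Finset.univ.filter fun w : Fin r → ZMod p => f w = a - C0).card * p
      = p ^ (r - 1) * p := by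
    rw [this]
    rw [← pow_succ]
    congr 1
    omega
  exact Nat.eq_of_mul_eq_mul_right (by omega) this

end AuxCount
section AuxBlock
open Finset Function

variable {p : ℕ}

lemma count_block (hp : p.Prime) (r : ℕ) (u' : ZMod (p ^ (r+1))) (D : ℕ) (a : ZMod p) :
    (Finset.univ.filter fun z : Fin (p ^ r) =>
      grayMap p (r+1) (u' + (D : ZMod (p ^ (r+1)))) z - grayMap p (r+1) u' z = a).card
    = if p ^ r ∣ D then (if ((D / p ^ r : ℕ) : ZMod p) = a then p ^ r else 0)
      else p ^ (r-1) := by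
  have hp1 : 1 < p := hp.one_lt
  by_cases hdvd : p ^ r ∣ D
  · rw [if_pos hdvd]
    obtain ⟨t, ht⟩ := hdvd
    have htd : D / p ^ r = t := by rw [ht, Nat.mul_div_cancel_left _ (by positivity)]
    have hshift : ∀ z : Fin (p ^ r),
        grayMap p (r+1) (u' + (D : ZMod (p ^ (r+1)))) z - grayMap p (r+1) u' z
          = (t : ZMod p) := by
      intro z
      rw [show (D : ZMod (p ^ (r+1))) = ((t * p ^ r : ℕ) : ZMod (p ^ (r+1))) by
        rw [ht, mul_comm], grayMap_shift hp1]
      ring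
    rw [htd]
    by_cases hta : (t : ZMod p) = a
    · rw [if_pos hta]
      rw [Finset.filter_true_of_mem (fun z _ => by rw [hshift z, hta])]
      simp
    · rw [if_neg hta]
      rw [Finset.filter_false_of_mem (fun z _ => by rw [hshift z]; exact hta)]
      simp
  · rw [if_neg hdvd]
    apply count_nondeg hp
    by_contra hcon
    push_neg at hcon
    set u : ZMod (p ^ (r+1)) := u' + (D : ZMod (p ^ (r+1))) with hu
    have hdig : ∀ i < r, pdigit p i u.val = pdigit p i u'.val := by
      intro i hi
      have := hcon i hi
      have h1 := pdigit_lt (p := p) (by omega) i u.val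
      have h2 := pdigit_lt (p := p) (by omega) i u'.val
      have := congrArg ZMod.val this
      rwa [ZMod.val_cast_of_lt h1, ZMod.val_cast_of_lt h2] at this
    have hmod : u.val % p ^ r = u'.val % p ^ r := mod_pow_eq_of_digits (by omega) r hdig
    apply hdvd
    have hDmod : ((D : ℤ) : ZMod (p ^ (r+1)))
        = (((u.val : ℤ) - (u'.val : ℤ) : ℤ) : ZMod (p ^ (r+1))) := by
      haveI : NeZero (p ^ (r+1)) := ⟨by positivity⟩
      push_cast
      rw [ZMod.natCast_val, ZMod.natCast_val, ZMod.cast_id, ZMod.cast_id, hu]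
      ring
    rw [ZMod.intCast_eq_intCast_iff] at hDmod
    have h3 : ((p : ℤ) ^ (r+1)) ∣ ((u.val : ℤ) - (u'.val : ℤ)) - (D : ℤ) := by
      have := Int.ModEq.dvd hDmod
      simpa using this
    have h4 : ((p : ℤ) ^ r) ∣ ((u.val : ℤ) - (u'.val : ℤ)) := by
      have : u'.val ≡ u.val [MOD p ^ r] := by
        unfold Nat.ModEq; omega
      have := Nat.ModEq.dvd this
      push_cast at this ⊢
      exact this
    have h5 : ((p : ℤ) ^ r) ∣ (D : ℤ) := by
      have h6 : ((p : ℤ) ^ r) ∣ ((u.val : ℤ) - (u'.val : ℤ)) - (D : ℤ) :=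
        dvd_trans (pow_dvd_pow _ (by omega)) h3
      have := dvd_sub h4 h6
      simpa using this
    exact_mod_cast (Int.natCast_dvd_natCast.mp (by push_cast at h5 ⊢; exact h5))
end AuxBlock
section AuxSums
open Finset

variable {p : ℕ}

lemma val_natCast_self [NeZero p] {x : ZMod p} : ((x.val : ℕ) : ZMod p) = x := by
  rw [ZMod.natCast_val, ZMod.cast_id]

lemma sum_block0 (hp : p.Prime) (M : ℕ) (a : ZMod p) :
    (∑ c ∈ Finset.range p, if ((M * c : ℕ) : ZMod p) = a then 1 else 0)
      = if p ∣ M then (if a = 0 then p else 0) else 1 := by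
  haveI : Fact p.Prime := ⟨hp⟩
  haveI : NeZero p := ⟨hp.ne_zero⟩
  by_cases hdvd : p ∣ M
  · rw [if_pos hdvd]
    have hz : ∀ c : ℕ, ((M * c : ℕ) : ZMod p) = 0 := by
      intro c
      rw [ZMod.natCast_eq_zero_iff]
      exact Dvd.dvd.mul_right hdvd c
    rw [Finset.sum_congr rfl (fun c _ => by rw [hz c])]
    by_cases ha : a = 0
    · subst ha; simp
    · rw [if_neg ha]
      rw [Finset.sum_congr rfl (fun c _ => if_neg (fun h => ha h.symm))]
      simp
  · rw [if_neg hdvd]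
    have hM0 : (M : ZMod p) ≠ 0 := by
      rw [Ne, ZMod.natCast_eq_zero_iff]; exact hdvd
    set w : ZMod p := (M : ZMod p)⁻¹ * a with hw
    rw [Finset.sum_eq_single_of_mem w.val (Finset.mem_range.mpr (ZMod.val_lt w))]
    · rw [if_pos]
      push_cast
      rw [val_natCast_self, hw, mul_inv_cancel_left₀ hM0]
    · intro b hb hbne
      rw [if_neg]
      intro h
      push_cast at h
      apply hbne
      have : (b : ZMod p) = w := by
        rw [hw]
        field_simp at h ⊢
        exact h
      rw [← ZMod.val_cast_of_lt (Finset.mem_range.mp hb), this]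

lemma sum_block_unit (hp : p.Prime) {mq : ℕ} (hm : ¬ p ∣ mq) (a : ZMod p) :
    (∑ c ∈ Finset.range (p - 1), if ((mq * (c+1) : ℕ) : ZMod p) = a then 1 else 0)
      = if a = 0 then 0 else 1 := by
  haveI : Fact p.Prime := ⟨hp⟩
  haveI : NeZero p := ⟨hp.ne_zero⟩
  have hp1 : 1 < p := hp.one_lt
  have hM0 : (mq : ZMod p) ≠ 0 := by
    rw [Ne, ZMod.natCast_eq_zero_iff]; exact hm
  have hcne : ∀ c ∈ Finset.range (p - 1), ((c + 1 : ℕ) : ZMod p) ≠ 0 := by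
    intro c hc
    have hlt : c + 1 < p := by have := Finset.mem_range.mp hc; omega
    intro h
    have := congrArg ZMod.val h
    rw [ZMod.val_cast_of_lt hlt, ZMod.val_zero] at this
    omega
  by_cases ha : a = 0
  · subst ha
    rw [if_pos rfl]
    apply Finset.sum_eq_zero
    intro c hc
    rw [if_neg]
    push_cast
    exact mul_ne_zero hM0 (by exact_mod_cast hcne c hc)
  · rw [if_neg ha]
    set w : ZMod p := (mq : ZMod p)⁻¹ * a with hw
    have hw0 : w ≠ 0 := by
      rw [hw]
      exact mul_ne_zero (inv_ne_zero hM0) ha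
    have hwval : 1 ≤ w.val := by
      rcases Nat.eq_zero_or_pos w.val with h | h
      · exact absurd ((ZMod.val_eq_zero w).mp h) hw0
      · omega
    rw [Finset.sum_eq_single_of_mem (w.val - 1)
        (Finset.mem_range.mpr (by have := ZMod.val_lt w; omega))]
    · rw [if_pos]
      push_cast [show w.val - 1 + 1 = w.val by omega]
      rw [val_natCast_self, hw, mul_inv_cancel_left₀ hM0]
    · intro b hb hbne
      rw [if_neg]
      intro h
      push_cast at h
      apply hbne
      have hbv : ((b + 1 : ℕ) : ZMod p) = w := by
        rw [hw]
        field_simp at h ⊢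
        exact_mod_cast h
      have hlt : b + 1 < p := by have := Finset.mem_range.mp hb; omega
      have := congrArg ZMod.val hbv
      rw [ZMod.val_cast_of_lt hlt] at this
      omega

lemma sum_block_high (hp : p.Prime) {M J mq : ℕ} (hM : M = p ^ J * mq) (hm : ¬ p ∣ mq)
    (a : ZMod p) (r : ℕ) (hr : 1 ≤ r) :
    (∑ c ∈ Finset.range (p - 1),
      if p ^ r ∣ M * (c + 1) then
        (if ((M * (c + 1) / p ^ r : ℕ) : ZMod p) = a then p ^ r else 0)
      else p ^ (r-1))
    = if r < J then (if a = 0 then (p-1) * p ^ r else 0)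
      else if r = J then (if a = 0 then 0 else p ^ J) else (p-1) * p ^ (r-1) := by
  haveI : Fact p.Prime := ⟨hp⟩
  haveI : NeZero p := ⟨hp.ne_zero⟩
  have hp1 : 1 < p := hp.one_lt
  rcases lt_trichotomy r J with hcase | hcase | hcase
  · -- r < J
    rw [if_pos hcase]
    have hterm : ∀ c ∈ Finset.range (p - 1),
        (if p ^ r ∣ M * (c + 1) then
          (if ((M * (c + 1) / p ^ r : ℕ) : ZMod p) = a then p ^ r else 0)
        else p ^ (r-1)) = (if (0 : ZMod p) = a then p ^ r else 0) := by
      intro c hc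
      have hdvd : p ^ r ∣ M * (c+1) := by
        rw [hM]
        exact Dvd.dvd.mul_right (Dvd.dvd.mul_right (pow_dvd_pow p (by omega)) mq) (c+1)
      rw [if_pos hdvd]
      congr 1
      have hdiv : M * (c+1) / p ^ r = p ^ (J - r) * mq * (c+1) := by
        rw [hM, show p ^ J = p ^ r * p ^ (J - r) by rw [← pow_add]; congr 1; omega]
        rw [mul_assoc, mul_assoc, Nat.mul_div_cancel_left _ (by positivity), mul_assoc]
      rw [hdiv]
      have : ((p ^ (J - r) * mq * (c+1) : ℕ) : ZMod p) = 0 := by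
        rw [ZMod.natCast_eq_zero_iff]
        exact Dvd.dvd.mul_right (Dvd.dvd.mul_right
          (dvd_pow_self p (by omega)) mq) (c+1)
      rw [this]
    rw [Finset.sum_congr rfl hterm, Finset.sum_const, Finset.card_range, smul_eq_mul]
    by_cases ha : a = 0
    · subst ha; simp
    · rw [if_neg ha, if_neg (fun h => ha h.symm)]
      exact mul_zero _
  · -- r = J
    subst hcase
    rw [if_neg (lt_irrefl r), if_pos rfl]
    have hterm : ∀ c ∈ Finset.range (p - 1),
        (if p ^ r ∣ M * (c + 1) then
          (if ((M * (c + 1) / p ^ r : ℕ) : ZMod p) = a then p ^ r else 0)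
        else p ^ (r-1))
        = p ^ r * (if ((mq * (c+1) : ℕ) : ZMod p) = a then 1 else 0) := by
      intro c hc
      have hdvd : p ^ r ∣ M * (c+1) := by
        rw [hM, mul_assoc]; exact Dvd.dvd.mul_right dvd_rfl _
      rw [if_pos hdvd]
      have hdiv : M * (c+1) / p ^ r = mq * (c+1) := by
        rw [hM, mul_assoc, Nat.mul_div_cancel_left _ (by positivity)]
      rw [hdiv]
      by_cases h : ((mq * (c+1) : ℕ) : ZMod p) = a
      · rw [if_pos h, if_pos h, mul_one]
      · rw [if_neg h, if_neg h, mul_zero]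
    rw [Finset.sum_congr rfl hterm, ← Finset.mul_sum, sum_block_unit hp hm a]
    by_cases ha : a = 0
    · subst ha; simp
    · rw [if_neg ha, if_neg ha, mul_one]
  · -- r > J
    rw [if_neg (by omega), if_neg (by omega)]
    have hterm : ∀ c ∈ Finset.range (p - 1),
        (if p ^ r ∣ M * (c + 1) then
          (if ((M * (c + 1) / p ^ r : ℕ) : ZMod p) = a then p ^ r else 0)
        else p ^ (r-1)) = p ^ (r-1) := by
      intro c hc
      rw [if_neg]
      intro hdvd
      have h1 : p ^ (J + 1) ∣ M * (c + 1) :=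
        dvd_trans (pow_dvd_pow p (by omega)) hdvd
      rw [hM, mul_assoc, pow_succ] at h1
      have h2 : p ∣ mq * (c + 1) :=
        (Nat.mul_dvd_mul_iff_left (show 0 < p ^ J by positivity)).mp h1
      rcases (Nat.Prime.dvd_mul hp).mp h2 with h | h
      · exact hm h
      · have hlt : c + 1 < p := by have := Finset.mem_range.mp hc; omega
        have := Nat.le_of_dvd (by omega) h
        omega
    rw [Finset.sum_congr rfl hterm, Finset.sum_const, Finset.card_range, smul_eq_mul]

lemma sum_E (hp1 : 1 < p) (J : ℕ) (a : ZMod p) [DecidableEq (ZMod p)] :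
    ∀ K, 1 ≤ K →
    (∑ r ∈ Finset.range K,
      (if r = 0 then (if 1 ≤ J then (if a = 0 then p else 0) else 1)
       else if r < J then (if a = 0 then (p-1) * p ^ r else 0)
       else if r = J then (if a = 0 then 0 else p ^ J)
       else (p-1) * p ^ (r-1)))
    = if K ≤ J then (if a = 0 then p ^ K else 0) else p ^ (K-1) := by
  intro K
  induction K with
  | zero => omega
  | succ K ih =>
    intro _
    rcases Nat.eq_zero_or_pos K with hK | hK
    · subst hK
      rw [Finset.sum_range_one, if_pos rfl]
      by_cases hJ : 1 ≤ J
      · rw [if_pos hJ, if_pos hJ]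
        by_cases ha : a = 0 <;> simp [ha, pow_one]
      · rw [if_neg hJ, if_neg hJ]
        simp
    · rw [Finset.sum_range_succ, ih hK]
      have hKne : K ≠ 0 := by omega
      have harith : ∀ q t : ℕ, p = q + 1 → p ^ t + (p - 1) * p ^ t = p ^ (t + 1) := by
        intro q t hq
        subst hq
        simp only [Nat.add_sub_cancel, pow_succ]
        ring
      rcases lt_trichotomy K J with hc | hc | hc
      · -- K < J, so K+1 ≤ J
        rw [if_pos (by omega : K ≤ J), if_pos (by omega : K + 1 ≤ J),
          if_neg hKne, if_pos hc]
        by_cases ha : a = 0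
        · rw [if_pos ha, if_pos ha, if_pos ha, harith (p-1) K (by omega)]
        · rw [if_neg ha, if_neg ha, if_neg ha]
      · -- K = J
        subst hc
        rw [if_pos le_rfl, if_neg (by omega : ¬ K + 1 ≤ K), if_neg hKne,
          if_neg (lt_irrefl K), if_pos rfl]
        by_cases ha : a = 0
        · rw [if_pos ha, if_pos ha, add_zero, Nat.add_sub_cancel]
        · rw [if_neg ha, if_neg ha, zero_add, Nat.add_sub_cancel]
      · -- K > J
        rw [if_neg (by omega : ¬ K ≤ J), if_neg (by omega : ¬ K + 1 ≤ J),
          if_neg hKne, if_neg (by omega : ¬ K < J), if_neg (by omega : K ≠ J)]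
        rw [harith (p-1) (K-1) (by omega)]
        congr 1
        omega

lemma sum_geo (hp1 : 1 < p) : ∀ K, 1 ≤ K →
    (∑ r ∈ Finset.range K, (if r = 0 then p else p - 1) * p ^ r) = p ^ K := by
  intro K
  induction K with
  | zero => omega
  | succ K ih =>
    intro _
    rcases Nat.eq_zero_or_pos K with hK | hK
    · subst hK
      simp [pow_one]
    · rw [Finset.sum_range_succ, ih hK, if_neg (by omega : K ≠ 0)]
      obtain ⟨q, hq⟩ : ∃ q, p = q + 1 := ⟨p - 1, by omega⟩
      subst hq
      simp only [Nat.add_sub_cancel, pow_succ]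
      ring

end AuxSums
section AuxMain
open Finset

/-- column value of `row 1` of the base matrix. -/
def colv (r c : ℕ) : ℕ := if r = 0 then c else c + 1

lemma filter_card_equiv {α β : Type*} [Fintype α] [Fintype β] (e : α ≃ β)
    (P : α → Prop) [DecidablePred P] :
    (Finset.univ.filter fun b => P (e.symm b)).card = (Finset.univ.filter P).card := by
  apply Finset.card_bij (fun b _ => e.symm b)
  · intro b hb
    simpa using (Finset.mem_filter.mp hb).2
  · intro b1 _ b2 _ h
    exact e.symm.injective h
  · intro a ha
    exact ⟨e a, by simpa using (Finset.mem_filter.mp ha).2, by simp⟩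

lemma intcast_toNat_mod {A B : ℕ} (hA : A ∣ B) (hB : 0 < B) (n : ℤ) :
    (((n % (B : ℤ)).toNat : ℕ) : ZMod A) = (n : ZMod A) := by
  have h0 : ((n % (B : ℤ)).toNat : ℤ) = n % (B : ℤ) :=
    Int.toNat_of_nonneg (Int.emod_nonneg n (by exact_mod_cast hB.ne'))
  have h1 : (((n % (B : ℤ)).toNat : ℤ) : ZMod A) = (n : ZMod A) := by
    rw [h0, ZMod.intCast_eq_intCast_iff]
    exact Int.emod_emod_of_dvd n (Int.natCast_dvd_natCast.mpr hA)
  exact_mod_cast h1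

variable {p s : ℕ}

lemma baseMat_m : (baseMat p s).m = 2 := rfl

/-- index of row 0 -/
def bk0 (p s : ℕ) : Fin (baseMat p s).m := ⟨0, by rw [baseMat_m]; omega⟩
/-- index of row 1 -/
def bk1 (p s : ℕ) : Fin (baseMat p s).m := ⟨1, by rw [baseMat_m]; omega⟩

lemma baseMat_row0 (r : Fin s) (c : Fin ((baseMat p s).α r)) :
    (baseMat p s).row (bk0 p s) r c = ((p ^ (r : ℕ) : ℕ) : ZMod (p ^ ((r : ℕ)+1))) := rfl

lemma baseMat_row1 (r : Fin s) (c : Fin ((baseMat p s).α r)) :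
    (baseMat p s).row (bk1 p s) r c
      = ((colv (r : ℕ) (c : ℕ) : ℕ) : ZMod (p ^ ((r : ℕ)+1))) := by
  by_cases h : (r : ℕ) = 0 <;> simp [baseMat, bk1, colv, h]

/-- the natural parametrisation of multiples of row 1. -/
def Wrow (p s : ℕ) (b : ℕ) : MixedVec p s (baseMat p s).α :=
  fun r c => ((b * colv (r : ℕ) (c : ℕ) : ℕ) : ZMod (p ^ ((r : ℕ)+1)))

lemma phi_point (hp : p.Prime) (m n : ℤ) (q : GrayIdx p s (baseMat p s).α) :
    PhiMap p s (baseMat p s).α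
        (m • (baseMat p s).row (bk0 p s) + n • (baseMat p s).row (bk1 p s)) q
      = PhiMap p s (baseMat p s).α (Wrow p s ((n % ((p ^ s : ℕ) : ℤ)).toNat)) q
        + (m : ZMod p) := by
  obtain ⟨r, c, z⟩ := q
  have hp1 : 1 < p := hp.one_lt
  have hrs : (r : ℕ) + 1 ≤ s := r.isLt
  set A : ℕ := p ^ ((r : ℕ) + 1) with hA
  haveI : NeZero A := ⟨by positivity⟩
  set ma : ℕ := (m % ((p : ℕ) : ℤ)).toNat with hma
  set nb : ℕ := (n % ((p ^ s : ℕ) : ℤ)).toNat with hnb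
  show grayMap p ((r : ℕ)+1)
      ((m • (baseMat p s).row (bk0 p s) + n • (baseMat p s).row (bk1 p s)) r c) z
    = grayMap p ((r : ℕ)+1) ((nb * colv (r : ℕ) (c : ℕ) : ℕ) : ZMod A) z + (m : ZMod p)
  have harg : (m • (baseMat p s).row (bk0 p s) + n • (baseMat p s).row (bk1 p s)) r c
      = ((nb * colv (r : ℕ) (c : ℕ) : ℕ) : ZMod A) + ((ma * p ^ (r : ℕ) : ℕ) : ZMod A) := by
    have hval : (m • (baseMat p s).row (bk0 p s) + n • (baseMat p s).row (bk1 p s)) r c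
        = (m : ZMod A) * ((p ^ (r : ℕ) : ℕ) : ZMod A)
          + (n : ZMod A) * ((colv (r : ℕ) (c : ℕ) : ℕ) : ZMod A) := by
      simp only [Pi.add_apply, Pi.smul_apply, zsmul_eq_mul, Pi.mul_apply, Pi.intCast_apply,
        baseMat_row0, baseMat_row1]
    rw [hval]
    have hn' : ((n : ℤ) : ZMod A) = ((nb : ℕ) : ZMod A) :=
      (intcast_toNat_mod (pow_dvd_pow p hrs) (by positivity) n).symm
    have hmm : (m : ℤ) = (ma : ℤ) + p * (m / p) := by
      rw [hma, Int.toNat_of_nonneg (Int.emod_nonneg m (by exact_mod_cast hp.ne_zero))]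
      rw [Int.emod_add_mul_ediv]
    have hpz : ((p : ℤ) : ZMod A) * (((p ^ (r : ℕ) : ℕ) : ℤ) : ZMod A) = 0 := by
      have : ((p * p ^ (r : ℕ) : ℕ) : ZMod A) = 0 := by
        rw [show p * p ^ (r : ℕ) = p ^ ((r : ℕ) + 1) by rw [pow_succ]; ring, ← hA]
        exact ZMod.natCast_self A
      push_cast at this ⊢
      exact this
    have hm' : ((m : ℤ) : ZMod A) * ((p ^ (r : ℕ) : ℕ) : ZMod A)
        = ((ma * p ^ (r : ℕ) : ℕ) : ZMod A) := by
      conv_lhs => rw [hmm]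
      push_cast at hpz ⊢
      rw [add_mul, mul_assoc, mul_comm ((m / p : ℤ) : ZMod A) _, ← mul_assoc, hpz]
      ring
    rw [hn', hm']
    push_cast
    ring
  rw [harg, grayMap_shift hp1]
  have hma' : ((ma : ℕ) : ZMod p) = (m : ZMod p) := by
    rw [hma]
    exact intcast_toNat_mod dvd_rfl (by omega) m
  rw [hma']

end AuxMain
/-- totals per block -/
def Efun (p J : ℕ) (a : ZMod p) : ℕ → ℕ := fun r =>
  if r = 0 then (if 1 ≤ J then (if a = 0 then p else 0) else 1)
  else if r < J then (if a = 0 then (p-1) * p ^ r else 0)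
  else if r = J then (if a = 0 then 0 else p ^ J)
  else (p-1) * p ^ (r-1)

lemma sum_Efun {p : ℕ} (hp1 : 1 < p) (J : ℕ) (a : ZMod p) (K : ℕ) (hK : 1 ≤ K) :
    (∑ r ∈ Finset.range K, Efun p J a r)
      = if K ≤ J then (if a = 0 then p ^ K else 0) else p ^ (K-1) := by
  simpa only [Efun] using sum_E hp1 J a K hK

/-- per-column counts -/
def gcount (p M : ℕ) (a : ZMod p) (rv cv : ℕ) : ℕ :=
  if p ^ rv ∣ M * colv rv cv then
    (if ((M * colv rv cv / p ^ rv : ℕ) : ZMod p) = a then p ^ rv else 0)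
  else p ^ (rv-1)

/-- the parametrisation of the code by `ZMod (p^s) × ZMod p`. -/
def Fmap (p s : ℕ) (ba : ZMod (p ^ s) × ZMod p) : MixedVec p s (baseMat p s).α :=
  fun r c => ((ba.1.val * colv (r : ℕ) (c : ℕ) + ba.2.val * p ^ (r : ℕ) : ℕ) :
    ZMod (p ^ ((r : ℕ)+1)))
set_option maxHeartbeats 3200000 in
/-- The `ℤ_pℤ_{p²}⋯ℤ_{p^s}`-additive code generated by the two rows of the base matrix
`A_p^{1,0,…,0,1}` is a `ℤ_pℤ_{p²}⋯ℤ_{p^s}`-additive generalized Hadamard code of type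
`(p, p-1, …, p-1; 1, 0, …, 0, 1)`: its column counts are `(p, p-1, …, p-1)`, it is
isomorphic as an abelian group to `ℤ_{p^s} × ℤ_p`, and its Gray image is a generalized
Hadamard code over `ℤ_p` of length `p^s`. -/
theorem base_matrix_GH_code (p s : ℕ) (hp : p.Prime) (hs : 2 ≤ s) :
    (baseMat p s).α = (fun r : Fin s => if (r : ℕ) = 0 then p else p - 1) ∧
      IsGHCode p (PhiMap p s (baseMat p s).α ''
        (AddSubgroup.closure (Set.range (baseMat p s).row) :
          Set (MixedVec p s (baseMat p s).α))) ∧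
      Nonempty ((AddSubgroup.closure (Set.range (baseMat p s).row) :
          AddSubgroup (MixedVec p s (baseMat p s).α)) ≃+ ZMod (p ^ s) × ZMod p) ∧
      Fintype.card (GrayIdx p s (baseMat p s).α) = p ^ s := by
  obtain ⟨s', rfl⟩ : ∃ s', s = s' + 2 := ⟨s - 2, by omega⟩
  set s : ℕ := s' + 2 with hs_def
  have hp1 : 1 < p := hp.one_lt
  haveI : Fact p.Prime := ⟨hp⟩
  haveI : NeZero p := ⟨hp.ne_zero⟩
  haveI : Fact (1 < p) := ⟨hp1⟩
  haveI : NeZero (p ^ s) := ⟨by positivity⟩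
  haveI : Fact (1 < p ^ s) := ⟨Nat.one_lt_pow (by omega) hp1⟩
  -- part 4 : cardinality
  have hcard : Fintype.card (GrayIdx p s (baseMat p s).α) = p ^ s := by
    rw [Fintype.card_sigma]
    have hterm : ∀ r : Fin s, Fintype.card (Fin ((baseMat p s).α r) × Fin (p ^ (r : ℕ)))
        = (if (r : ℕ) = 0 then p else p - 1) * p ^ (r : ℕ) := by
      intro r
      rw [Fintype.card_prod, Fintype.card_fin, Fintype.card_fin]
      rfl
    rw [Finset.sum_congr rfl (fun r _ => hterm r),
      Fin.sum_univ_eq_sum_range (fun rv => (if rv = 0 then p else p - 1) * p ^ rv) s]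
    exact sum_geo hp1 s (by omega)
  -- the pair description of the generators
  have hrpair : Set.range (baseMat p s).row
      = {(baseMat p s).row (bk0 p s), (baseMat p s).row (bk1 p s)} := by
    ext y
    simp only [Set.mem_range, Set.mem_insert_iff, Set.mem_singleton_iff]
    constructor
    · rintro ⟨k, rfl⟩
      have hk2 : (k : ℕ) < 2 := k.isLt
      have hk01 : (k : ℕ) = 0 ∨ (k : ℕ) = 1 := by omega
      rcases hk01 with h | h
      · left; rw [show k = bk0 p s from Fin.ext (by simp [bk0, h])]
      · right; rw [show k = bk1 p s from Fin.ext (by simp [bk1, h])]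
    · rintro (rfl | rfl)
      exacts [⟨bk0 p s, rfl⟩, ⟨bk1 p s, rfl⟩]
  -- part 3 : the group structure
  have hmemclosure : ∀ y, y ∈ AddSubgroup.closure (Set.range (baseMat p s).row) ↔
      ∃ m n : ℤ, m • (baseMat p s).row (bk0 p s) + n • (baseMat p s).row (bk1 p s) = y := by
    intro y
    rw [hrpair]
    exact AddSubgroup.mem_closure_pair
  have hequiv : Nonempty ((AddSubgroup.closure (Set.range (baseMat p s).row) :
      AddSubgroup (MixedVec p s (baseMat p s).α)) ≃+ ZMod (p ^ s) × ZMod p) := by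
    have hFadd : ∀ x y : ZMod (p ^ s) × ZMod p,
        Fmap p s (x + y) = Fmap p s x + Fmap p s y := by
      intro x y
      funext r c
      show (((x.1 + y.1).val * colv (r : ℕ) (c : ℕ) + (x.2 + y.2).val * p ^ (r : ℕ) : ℕ) :
          ZMod (p ^ ((r : ℕ)+1)))
        = ((x.1.val * colv (r : ℕ) (c : ℕ) + x.2.val * p ^ (r : ℕ) : ℕ) : _)
          + ((y.1.val * colv (r : ℕ) (c : ℕ) + y.2.val * p ^ (r : ℕ) : ℕ) : _)
      rw [← Nat.cast_add, ZMod.natCast_eq_natCast_iff]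
      have h1 : (x.1 + y.1).val * colv (r : ℕ) (c : ℕ)
          ≡ (x.1.val + y.1.val) * colv (r : ℕ) (c : ℕ) [MOD p ^ ((r : ℕ)+1)] := by
        apply Nat.ModEq.mul_right
        apply Nat.ModEq.of_dvd (pow_dvd_pow p r.isLt)
        rw [ZMod.val_add]
        exact Nat.mod_modEq _ _
      have h2 : (x.2 + y.2).val * p ^ (r : ℕ)
          ≡ (x.2.val + y.2.val) * p ^ (r : ℕ) [MOD p ^ ((r : ℕ)+1)] := by
        rw [show p ^ ((r : ℕ)+1) = p * p ^ (r : ℕ) by rw [pow_succ]; ring]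
        apply Nat.ModEq.mul_right'
        rw [ZMod.val_add]
        exact Nat.mod_modEq _ _
      calc (x.1 + y.1).val * colv (r : ℕ) (c : ℕ) + (x.2 + y.2).val * p ^ (r : ℕ)
          ≡ (x.1.val + y.1.val) * colv (r : ℕ) (c : ℕ)
            + (x.2.val + y.2.val) * p ^ (r : ℕ) [MOD p ^ ((r : ℕ)+1)] := h1.add h2
        _ = (x.1.val * colv (r : ℕ) (c : ℕ) + x.2.val * p ^ (r : ℕ))
            + (y.1.val * colv (r : ℕ) (c : ℕ) + y.2.val * p ^ (r : ℕ)) := by ring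
    set F : ZMod (p ^ s) × ZMod p →+ MixedVec p s (baseMat p s).α :=
      AddMonoidHom.mk' (Fmap p s) hFadd with hF
    have hFapp : ∀ (ba : ZMod (p ^ s) × ZMod p) (r : Fin s) (c : Fin ((baseMat p s).α r)),
        F ba r c = ((ba.1.val * colv (r : ℕ) (c : ℕ) + ba.2.val * p ^ (r : ℕ) : ℕ) :
          ZMod (p ^ ((r : ℕ)+1))) := fun _ _ _ => rfl
    have hc0 : 0 < (baseMat p s).α ⟨0, by omega⟩ := by
      show 0 < if (0 : ℕ) = 0 then p else p - 1
      simpa using hp.pos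
    have hc1 : 0 < (baseMat p s).α ⟨s' + 1, by omega⟩ := by
      show 0 < if (s' + 1 : ℕ) = 0 then p else p - 1
      rw [if_neg (by omega)]
      omega
    have hFinj : Function.Injective F := by
      rw [injective_iff_map_eq_zero]
      rintro ⟨b, a2⟩ h
      have h0 := congrFun (congrFun h ⟨0, by omega⟩) ⟨0, hc0⟩
      have h0'' : ((b.val * colv 0 0 + a2.val * p ^ 0 : ℕ) : ZMod (p ^ (0+1))) = 0 := h0
      have h0' : ((a2.val : ℕ) : ZMod (p ^ (0+1))) = 0 := by
        rw [show colv 0 0 = 0 by simp [colv]] at h0''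
        simpa using h0''
      haveI : NeZero (p ^ (0+1)) := ⟨by positivity⟩
      rw [ZMod.natCast_eq_zero_iff] at h0'
      have ha2 : a2.val = 0 := by
        have hlt := ZMod.val_lt a2
        have hple : p ^ (0+1) = p := by norm_num
        rw [hple] at h0'
        exact Nat.eq_zero_of_dvd_of_lt h0' hlt
      have h1 := congrFun (congrFun h ⟨s' + 1, by omega⟩) ⟨0, hc1⟩
      have h1'' : ((b.val * colv (s' + 1) 0 + a2.val * p ^ (s' + 1) : ℕ) :
          ZMod (p ^ (s' + 1 + 1))) = 0 := h1
      have h1' : ((b.val : ℕ) : ZMod (p ^ (s' + 1 + 1))) = 0 := by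
        rw [show colv (s' + 1) 0 = 1 by simp [colv], ha2] at h1''
        simpa using h1''
      haveI : NeZero (p ^ (s' + 1 + 1)) := ⟨by positivity⟩
      rw [ZMod.natCast_eq_zero_iff] at h1'
      have hb : b.val = 0 := by
        have hlt := ZMod.val_lt b
        exact Nat.eq_zero_of_dvd_of_lt h1' hlt
      have hb0 : b = 0 := by rwa [← ZMod.val_eq_zero]
      have ha20 : a2 = 0 := by rwa [← ZMod.val_eq_zero]
      rw [hb0, ha20]
      rfl
    have hFrange : F.range = AddSubgroup.closure (Set.range (baseMat p s).row) := by
      apply le_antisymm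
      · rintro y ⟨⟨b, a2⟩, rfl⟩
        have hmem0 : (baseMat p s).row (bk0 p s)
            ∈ AddSubgroup.closure (Set.range (baseMat p s).row) :=
          AddSubgroup.subset_closure ⟨bk0 p s, rfl⟩
        have hmem1 : (baseMat p s).row (bk1 p s)
            ∈ AddSubgroup.closure (Set.range (baseMat p s).row) :=
          AddSubgroup.subset_closure ⟨bk1 p s, rfl⟩
        have hrepr : F (b, a2) = a2.val • (baseMat p s).row (bk0 p s)
            + b.val • (baseMat p s).row (bk1 p s) := by
          funext r c
          rw [hFapp]
          show _ = (a2.val • (baseMat p s).row (bk0 p s)) r c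
            + (b.val • (baseMat p s).row (bk1 p s)) r c
          simp only [Pi.smul_apply, nsmul_eq_mul, baseMat_row0, baseMat_row1]
          push_cast
          ring
        rw [hrepr]
        exact AddSubgroup.add_mem _ (AddSubgroup.nsmul_mem _ hmem0 _)
          (AddSubgroup.nsmul_mem _ hmem1 _)
      · rw [AddSubgroup.closure_le]
        rintro y ⟨k, rfl⟩
        have hk2 : (k : ℕ) < 2 := k.isLt
        have hk01 : (k : ℕ) = 0 ∨ (k : ℕ) = 1 := by omega
        rcases hk01 with hk | hk
        · rw [show k = bk0 p s from Fin.ext (by simp [bk0, hk])]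
          refine ⟨((0 : ZMod (p ^ s)), (1 : ZMod p)), ?_⟩
          funext r c
          rw [hFapp]
          rw [ZMod.val_zero, ZMod.val_one, baseMat_row0]
          norm_num
        · rw [show k = bk1 p s from Fin.ext (by simp [bk1, hk])]
          refine ⟨((1 : ZMod (p ^ s)), (0 : ZMod p)), ?_⟩
          funext r c
          rw [hFapp]
          rw [ZMod.val_zero, ZMod.val_one, baseMat_row1]
          norm_num
    exact ⟨((AddMonoidHom.ofInjective hFinj).trans
      (AddEquiv.addSubgroupCongr hFrange)).symm⟩
  -- part 2 : the GH property
  refine ⟨rfl, ?_, hequiv, hcard⟩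
  -- setup
  have hPlen : p * p ^ (s - 1) = p ^ s := (pow_succ' p (s' + 1)).symm
  have hq0c : 0 < (baseMat p s).α ⟨0, by omega⟩ := by
    show 0 < if (0 : ℕ) = 0 then p else p - 1
    simpa using hp.pos
  set q0 : GrayIdx p s (baseMat p s).α :=
    ⟨⟨0, by omega⟩, ⟨0, hq0c⟩, ⟨0, by norm_num⟩⟩ with hq0
  have hcard' : Fintype.card (GrayIdx p s (baseMat p s).α) = p * p ^ (s - 1) := by
    rw [hcard, hPlen]
  have hPpos : 0 < p * p ^ (s - 1) := by positivity
  set e0 : GrayIdx p s (baseMat p s).α ≃ Fin (p * p ^ (s - 1)) :=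
    Fintype.equivFinOfCardEq hcard' with he0
  set e : GrayIdx p s (baseMat p s).α ≃ Fin (p * p ^ (s - 1)) :=
    e0.trans (Equiv.swap (e0 q0) ⟨0, hPpos⟩) with he
  have hesymm0 : ∀ h : 0 < p * p ^ (s - 1), e.symm ⟨0, h⟩ = q0 := by
    intro h
    rw [he]
    simp [Equiv.symm_trans_apply, Equiv.symm_swap, Equiv.swap_apply_right]
  refine ⟨p ^ (s - 1), e,
    Matrix.of (fun i k => PhiMap p s (baseMat p s).α (Wrow p s (i : ℕ)) (e.symm k)),
    ?_, ?_, ?_⟩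
  · -- IsGHMatrix
    intro i j hij a
    have hiP : (i : ℕ) < p ^ s := by have := i.isLt; omega
    have hjP : (j : ℕ) < p ^ s := by have := j.isLt; omega
    set N : ℕ := (i : ℕ) + (p * p ^ (s - 1) - (j : ℕ)) with hN
    set M : ℕ := N % p ^ s with hM
    have hjN : (j : ℕ) + N = (i : ℕ) + p ^ s := by
      have hj := j.isLt
      rw [hN]
      omega
    have hmod : ((j : ℕ) + M) ≡ (i : ℕ) [MOD p ^ s] := by
      have h1 : ((j : ℕ) + M) ≡ ((j : ℕ) + N) [MOD p ^ s] :=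
        Nat.ModEq.add_left _ (Nat.mod_modEq N (p ^ s))
      have h2 : ((j : ℕ) + N) ≡ (i : ℕ) [MOD p ^ s] := by
        rw [hjN]
        show ((i : ℕ) + p ^ s) % p ^ s = (i : ℕ) % p ^ s
        exact Nat.add_mod_right _ _
      exact h1.trans h2
    have hM0 : M ≠ 0 := by
      intro h0
      apply hij
      have h1 := hmod
      rw [h0, add_zero] at h1
      apply Fin.ext
      unfold Nat.ModEq at h1
      rw [Nat.mod_eq_of_lt hjP, Nat.mod_eq_of_lt hiP] at h1
      omega
    have hMlt : M < p ^ s := Nat.mod_lt _ (by positivity)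
    set J : ℕ := padicValNat p M with hJ
    have hpJdvd : p ^ J ∣ M := pow_padicValNat_dvd
    set mq : ℕ := M / p ^ J with hmq_def
    have hMJ : M = p ^ J * mq := (Nat.mul_div_cancel' hpJdvd).symm
    have hmq : ¬ p ∣ mq := by
      intro hdvd
      apply pow_succ_padicValNat_not_dvd hM0 (p := p)
      have hstep : p ^ (J + 1) ∣ p ^ J * mq := by
        rw [pow_succ]
        exact Nat.mul_dvd_mul_left _ hdvd
      rw [← hMJ] at hstep
      exact hstep
    have hJlt : J < s := by
      have h1 : p ^ J ≤ M := Nat.le_of_dvd (by omega) hpJdvd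
      have h2 : p ^ J < p ^ s := lt_of_le_of_lt h1 hMlt
      exact (Nat.pow_lt_pow_iff_right hp1).mp h2
    have hW : ∀ (r : Fin s) (c : Fin ((baseMat p s).α r)),
        Wrow p s (i : ℕ) r c = Wrow p s (j : ℕ) r c
          + ((M * colv (r : ℕ) (c : ℕ) : ℕ) : ZMod (p ^ ((r : ℕ)+1))) := by
      intro r c
      show (((i : ℕ) * colv (r : ℕ) (c : ℕ) : ℕ) : ZMod (p ^ ((r : ℕ)+1)))
        = (((j : ℕ) * colv (r : ℕ) (c : ℕ) : ℕ) : _)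
          + ((M * colv (r : ℕ) (c : ℕ) : ℕ) : _)
      rw [← Nat.cast_add, ZMod.natCast_eq_natCast_iff]
      have hre : (j : ℕ) * colv (r : ℕ) (c : ℕ) + M * colv (r : ℕ) (c : ℕ)
          = ((j : ℕ) + M) * colv (r : ℕ) (c : ℕ) := by ring
      rw [hre]
      exact (Nat.ModEq.mul_right _ (Nat.ModEq.of_dvd (pow_dvd_pow p r.isLt) hmod)).symm
    have step1 : (Finset.univ.filter fun k : Fin (p * p ^ (s-1)) =>
        (PhiMap p s (baseMat p s).α (Wrow p s (i : ℕ)) (e.symm k)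
          - PhiMap p s (baseMat p s).α (Wrow p s (j : ℕ)) (e.symm k) = a)).card
        = (Finset.univ.filter fun q : GrayIdx p s (baseMat p s).α =>
          PhiMap p s (baseMat p s).α (Wrow p s (i : ℕ)) q
            - PhiMap p s (baseMat p s).α (Wrow p s (j : ℕ)) q = a).card :=
      filter_card_equiv e (fun q => PhiMap p s (baseMat p s).α (Wrow p s (i : ℕ)) q
        - PhiMap p s (baseMat p s).α (Wrow p s (j : ℕ)) q = a)
    have step2 : (Finset.univ.filter fun q : GrayIdx p s (baseMat p s).α =>
        PhiMap p s (baseMat p s).α (Wrow p s (i : ℕ)) q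
          - PhiMap p s (baseMat p s).α (Wrow p s (j : ℕ)) q = a).card
        = ∑ r : Fin s, ∑ c : Fin ((baseMat p s).α r), ∑ z : Fin (p ^ (r : ℕ)),
            (if grayMap p ((r : ℕ)+1) (Wrow p s (i : ℕ) r c) z
                - grayMap p ((r : ℕ)+1) (Wrow p s (j : ℕ) r c) z = a then 1 else 0) := by
      rw [Finset.card_filter, ← Finset.univ_sigma_univ, Finset.sum_sigma]
      apply Finset.sum_congr rfl
      intro r _
      rw [← Finset.univ_product_univ, Finset.sum_product]
      rfl
    have step3 : ∀ r : Fin s, (∑ c : Fin ((baseMat p s).α r), ∑ z : Fin (p ^ (r : ℕ)),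
        (if grayMap p ((r : ℕ)+1) (Wrow p s (i : ℕ) r c) z
            - grayMap p ((r : ℕ)+1) (Wrow p s (j : ℕ) r c) z = a then 1 else 0))
        = Efun p J a (r : ℕ) := by
      intro r
      have hzsum : ∀ c : Fin ((baseMat p s).α r), (∑ z : Fin (p ^ (r : ℕ)),
          (if grayMap p ((r : ℕ)+1) (Wrow p s (i : ℕ) r c) z
              - grayMap p ((r : ℕ)+1) (Wrow p s (j : ℕ) r c) z = a then 1 else 0))
          = gcount p M a (r : ℕ) (c : ℕ) := by
        intro c
        rw [← Finset.card_filter]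
        have hcb := count_block hp (r : ℕ) (Wrow p s (j : ℕ) r c)
          (M * colv (r : ℕ) (c : ℕ)) a
        rw [← hW r c] at hcb
        exact hcb
      rw [Finset.sum_congr rfl (fun c _ => hzsum c),
        Fin.sum_univ_eq_sum_range (fun cv => gcount p M a (r : ℕ) cv) ((baseMat p s).α r)]
      have hdJ : p ∣ M ↔ 1 ≤ J := ⟨fun h => one_le_padicValNat_of_dvd (by omega) h,
        fun h => dvd_trans (dvd_pow_self p (by omega)) hpJdvd⟩
      by_cases hr0 : (r : ℕ) = 0
      · rw [show (baseMat p s).α r = if (r : ℕ) = 0 then p else p - 1 from rfl,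
          if_pos hr0, hr0]
        have hg0 : ∀ cv, gcount p M a 0 cv
            = if ((M * cv : ℕ) : ZMod p) = a then 1 else 0 := by
          intro cv
          simp [gcount, colv]
        rw [Finset.sum_congr rfl (fun cv _ => hg0 cv), sum_block0 hp M a]
        have hE0 : Efun p J a 0 = if 1 ≤ J then (if a = 0 then p else 0) else 1 := by
          simp [Efun]
        rw [hE0]
        exact if_congr hdJ rfl rfl
      · rw [show (baseMat p s).α r = if (r : ℕ) = 0 then p else p - 1 from rfl, if_neg hr0]
        have hg1 : ∀ cv, gcount p M a (r : ℕ) cv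
            = (if p ^ (r : ℕ) ∣ M * (cv+1) then
                (if ((M * (cv+1) / p ^ (r : ℕ) : ℕ) : ZMod p) = a then p ^ (r : ℕ) else 0)
              else p ^ ((r : ℕ)-1)) := by
          intro cv
          simp [gcount, colv, hr0]
        rw [Finset.sum_congr rfl (fun cv _ => hg1 cv),
          sum_block_high hp hMJ hmq a (r : ℕ) (by omega)]
        have hE1 : Efun p J a (r : ℕ)
            = if (r : ℕ) < J then (if a = 0 then (p-1) * p ^ (r : ℕ) else 0)
              else if (r : ℕ) = J then (if a = 0 then 0 else p ^ J)
              else (p-1) * p ^ ((r : ℕ)-1) := by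
          simp [Efun, hr0]
        rw [hE1]
    show (Finset.univ.filter fun k : Fin (p * p ^ (s-1)) =>
        (PhiMap p s (baseMat p s).α (Wrow p s (i : ℕ)) (e.symm k)
          - PhiMap p s (baseMat p s).α (Wrow p s (j : ℕ)) (e.symm k) = a)).card = p ^ (s-1)
    rw [step1, step2, Finset.sum_congr rfl (fun r _ => step3 r),
      Fin.sum_univ_eq_sum_range (fun rv => Efun p J a rv) s,
      sum_Efun hp1 J a s (by omega), if_neg (by omega : ¬ s ≤ J)]
  · -- IsNormalized
    intro k
    constructor
    · show PhiMap p s (baseMat p s).α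
        (Wrow p s ((⟨0, k.pos⟩ : Fin (p * p ^ (s - 1))) : ℕ)) (e.symm k) = 0
      obtain ⟨r, c, z⟩ := e.symm k
      show grayMap p ((r : ℕ)+1) (((0 * colv (r : ℕ) (c : ℕ) : ℕ)) : ZMod (p ^ ((r:ℕ)+1))) z
        = 0
      rw [zero_mul, Nat.cast_zero]
      exact grayMap_zero_s5 hp1 (r : ℕ) z
    · show PhiMap p s (baseMat p s).α (Wrow p s (k : ℕ)) (e.symm ⟨0, k.pos⟩) = 0
      rw [hesymm0 k.pos]
      show grayMap p (0+1) ((((k : ℕ) * colv 0 0 : ℕ)) : ZMod (p ^ (0+1))) ⟨0, by norm_num⟩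
        = 0
      rw [show colv 0 0 = 0 by simp [colv], mul_zero, Nat.cast_zero]
      exact grayMap_zero_s5 hp1 0 _
  · -- the set equality
    ext x
    simp only [Set.mem_image, Set.mem_setOf_eq, SetLike.mem_coe]
    constructor
    · rintro ⟨y, hy, rfl⟩
      obtain ⟨m, n, hmn⟩ := (hmemclosure y).mp hy
      have hblt : ((n % ((p ^ s : ℕ) : ℤ)).toNat) < p * p ^ (s - 1) := by
        have h1 : 0 ≤ n % ((p ^ s : ℕ) : ℤ) := Int.emod_nonneg n (by positivity)
        have h2 : n % ((p ^ s : ℕ) : ℤ) < ((p ^ s : ℕ) : ℤ) :=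
          Int.emod_lt_of_pos n (by positivity)
        rw [hPlen]
        omega
      refine ⟨⟨(n % ((p ^ s : ℕ) : ℤ)).toNat, hblt⟩, (m : ZMod p), fun q => ?_⟩
      rw [← hmn, phi_point hp m n q]
      congr 1
      show PhiMap p s (baseMat p s).α (Wrow p s ((n % ((p ^ s : ℕ) : ℤ)).toNat)) q
        = PhiMap p s (baseMat p s).α (Wrow p s ((n % ((p ^ s : ℕ) : ℤ)).toNat)) (e.symm (e q))
      rw [Equiv.symm_apply_apply]
    · rintro ⟨b, a2, hx⟩
      refine ⟨((a2.val : ℤ)) • (baseMat p s).row (bk0 p s)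
        + (((b : ℕ) : ℤ)) • (baseMat p s).row (bk1 p s),
        (hmemclosure _).mpr ⟨((a2.val : ℤ)), (((b : ℕ) : ℤ)), rfl⟩, ?_⟩
      funext q
      rw [hx q, phi_point hp ((a2.val : ℤ)) (((b : ℕ) : ℤ)) q]
      have hbmod : (((((b : ℕ) : ℤ)) % ((p ^ s : ℕ) : ℤ)).toNat) = (b : ℕ) := by
        have hblt' : (b : ℕ) < p ^ s := by
          have := b.isLt
          omega
        rw [Int.emod_eq_of_lt (by positivity) (by exact_mod_cast hblt')]
        exact Int.toNat_natCast _
      rw [hbmod]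
      congr 1
      · show PhiMap p s (baseMat p s).α (Wrow p s ((b : ℕ))) q
          = PhiMap p s (baseMat p s).α (Wrow p s ((b : ℕ))) (e.symm (e q))
        rw [Equiv.symm_apply_apply]
      · push_cast
        exact val_natCast_self
end

section
/- Let p be a prime, λ a positive integer, and N = pλ. If H is a normalized generalized Hadamard matrix H(p,λ) over ℤp, then the generalized Hadamard code C_H = ∪_{α∈ℤp}(F_H + α·1) has minimum Hamming distance d(C_H) = N(p−1)/p = λ(p−1). -/
lemma GH_key (p lam : ℕ) (H : Matrix (Fin (p * lam)) (Fin (p * lam)) (ZMod p))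
    (hH : ∀ i j : Fin (p * lam), i ≠ j → ∀ a : ZMod p,
      (Finset.univ.filter fun k => H i k - H j k = a).card = lam)
    (i j : Fin (p * lam)) (hij : i ≠ j) (a b : ZMod p) :
    hammingDist (fun k => H i k + a) (fun k => H j k + b) = lam * (p - 1) := by
  classical
  have hiff : ∀ k, (H i k + a = H j k + b) ↔ (H i k - H j k = b - a) :=
    fun k => ⟨fun h => by linear_combination h, fun h => by linear_combination h⟩
  have h1 : hammingDist (fun k => H i k + a) (fun k => H j k + b)
      = (Finset.univ.filter fun k => ¬ (H i k - H j k = b - a)).card := by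
    unfold hammingDist
    congr 1
    apply Finset.filter_congr
    intro k _
    exact not_congr (hiff k)
  have h2 := Finset.card_filter_add_card_filter_not
    (s := (Finset.univ : Finset (Fin (p * lam)))) (p := fun k => H i k - H j k = b - a)
  have h3 := hH i j hij (b - a)
  have hc : (Finset.univ : Finset (Fin (p * lam))).card = p * lam := by simp
  have hplam : lam * (p - 1) = p * lam - lam := by
    cases p with
    | zero => simp
    | succ q =>
        rw [Nat.succ_mul, Nat.add_sub_cancel, Nat.add_sub_cancel, Nat.mul_comm]
  omega

/-- The generalized Hadamard code `C_H` of a normalized GH matrix `H(p,λ)` has minimum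
Hamming distance `N(p-1)/p = λ(p-1)`, where `N = pλ`: `λ(p-1)` is the least element of
the set of Hamming distances between distinct codewords. -/
theorem GH_code_min_distance (p lam : ℕ) (hp : p.Prime) (hlam : 0 < lam)
    (H : Matrix (Fin (p * lam)) (Fin (p * lam)) (ZMod p))
    (hH : IsGHMatrix p lam H) (hnorm : IsNormalized H) :
    IsLeast {d : ℕ | ∃ u ∈ GHCodeOf H, ∃ v ∈ GHCodeOf H, u ≠ v ∧ hammingDist u v = d}
      (lam * (p - 1)) := by
  classical
  have hp2 : 2 ≤ p := hp.two_le
  have hN : 2 ≤ p * lam := by nlinarith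
  constructor
  · refine ⟨fun k => H ⟨0, by omega⟩ k + 0, ⟨⟨0, by omega⟩, 0, rfl⟩,
      fun k => H ⟨1, by omega⟩ k + 0, ⟨⟨1, by omega⟩, 0, rfl⟩, ?_, ?_⟩
    · intro h
      have hd := GH_key p lam H hH ⟨0, by omega⟩ ⟨1, by omega⟩ (by simp [Fin.ext_iff]) 0 0
      rw [h] at hd
      simp at hd
      omega
    · exact GH_key p lam H hH ⟨0, by omega⟩ ⟨1, by omega⟩ (by simp [Fin.ext_iff]) 0 0
  · rintro d ⟨u, ⟨i, a, rfl⟩, v, ⟨j, b, rfl⟩, huv, rfl⟩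
    by_cases hij : i = j
    · subst hij
      have hab : a ≠ b := by
        intro h; exact huv (by rw [h])
      have hd : hammingDist (fun k => H i k + a) (fun k => H i k + b)
          = p * lam := by
        unfold hammingDist
        rw [Finset.filter_true_of_mem, Finset.card_univ, Fintype.card_fin]
        intro k _
        simp [hab]
      rw [show (fun j => H i j + a) = (fun k => H i k + a) from rfl,
        show (fun j => H i j + b) = (fun k => H i k + b) from rfl, hd]
      calc lam * (p - 1) ≤ lam * p := Nat.mul_le_mul_left lam (by omega)
        _ = p * lam := Nat.mul_comm lam p
    · exact le_of_eq (GH_key p lam H hH i j hij a b).symm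
end
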